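/- Let X, Y, Z be measurable spaces, π a probability measure on X, and c : X ⇝ Y, d : Y ⇝ Z Markov kernels. Suppose c' : Y ⇝ X is a Bayesian inversion of c with respect to π, and d' : Z ⇝ Y is a Bayesian inversion of d with respect to the pushforward c∘π. Then the Chapman–Kolmogorov composite kernel c' ∘ d' : Z ⇝ X is a Bayesian inversion of the composite kernel d ∘ c : X ⇝ Z with respect to π. -/

import Mathlib

/-!
Write every joint measure as a string diagram, `π ⊗ₘ c = (id ∥ₖ c) ∘ₘ copy ∘ₘ π`. Then `c'`
inverts `c` with respect to `π` exactly when `(id ∥ₖ c') ∘ₘ copy ∘ₘ c ∘ₘ π = (c ∥ₖ id) ∘ₘ copy ∘ₘ π`.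
For the composite, split `id ∥ₖ (c' ∘ₖ d')` as `(id ∥ₖ c') ∘ₖ (id ∥ₖ d')`, use the inversion
property of `d'`, slide `id ∥ₖ c'` past `d ∥ₖ id` (they act on different factors), and finish
with the inversion property of `c'`.
-/

open MeasureTheory ProbabilityTheory

/-- The joint measure of the generative model `(π, c)` on `X × Y`:
`(π ⊗ c)(E) = ∫ c(x)({y : (x,y) ∈ E}) dπ(x)`. -/
noncomputable def jointMeasure {X Y : Type*} [MeasurableSpace X] [MeasurableSpace Y]
    (π : Measure X) (c : Kernel X Y) : Measure (X × Y) :=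
  π.bind (fun x => (c x).map (fun y => (x, y)))

/-- `c' : Y ⇝ X` is a Bayesian inversion of `c : X ⇝ Y` with respect to `π` if the joint
measure `π ⊗ c` equals the pushforward of `(c∘π) ⊗ c'` under the swap map. -/
def IsBayesianInversion {X Y : Type*} [MeasurableSpace X] [MeasurableSpace Y]
    (π : Measure X) (c : Kernel X Y) (c' : Kernel Y X) : Prop :=
  jointMeasure π c = (jointMeasure (π.bind c) c').map Prod.swap

section

variable {X Y : Type*} [MeasurableSpace X] [MeasurableSpace Y]

lemma jointMeasure_eq_compProd (π : Measure X) [SFinite π] (c : Kernel X Y)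
    [IsSFiniteKernel c] : jointMeasure π c = π ⊗ₘ c := by
  rw [Measure.compProd_eq_comp_prod, jointMeasure]
  congr with x : 1
  rw [Kernel.prod_apply, Kernel.id_apply, Measure.dirac_prod]

lemma map_swap_compProd_eq_parallelComp_comp_copy_comp (π : Measure X) [SFinite π]
    (c : Kernel X Y) [IsSFiniteKernel c] :
    (π ⊗ₘ c).map Prod.swap = (c ∥ₖ Kernel.id) ∘ₘ Kernel.copy X ∘ₘ π := by
  rw [← Measure.swap_comp, Measure.compProd_eq_parallelComp_comp_copy_comp, Measure.comp_assoc,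
    Kernel.swap_parallelComp, Measure.comp_assoc, Kernel.comp_assoc, Kernel.swap_copy,
    Measure.comp_assoc]

lemma isBayesianInversion_iff_parallelComp_comp_copy_comp {π : Measure X} [SFinite π]
    {c : Kernel X Y} [IsSFiniteKernel c] {c' : Kernel Y X} [IsSFiniteKernel c'] :
    IsBayesianInversion π c c' ↔
      (Kernel.id ∥ₖ c') ∘ₘ Kernel.copy Y ∘ₘ c ∘ₘ π = (c ∥ₖ Kernel.id) ∘ₘ Kernel.copy X ∘ₘ π := by
  rw [IsBayesianInversion, jointMeasure_eq_compProd, jointMeasure_eq_compProd,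
    ← Measure.compProd_eq_parallelComp_comp_copy_comp,
    ← map_swap_compProd_eq_parallelComp_comp_copy_comp, eq_comm]
  exact MeasurableEquiv.prodComm.map_apply_eq_iff_map_symm_apply_eq

end

/-- Bayesian inversions compose according to the lens pattern: if `c'` inverts `c` w.r.t. `π`
and `d'` inverts `d` w.r.t. `c∘π`, then the Chapman–Kolmogorov composite `c' ∘ d'` is a
Bayesian inversion of `d ∘ c` w.r.t. `π`. -/
theorem bayesian_inversion_comp
    {X Y Z : Type*} [MeasurableSpace X] [MeasurableSpace Y] [MeasurableSpace Z]
    (π : Measure X) [IsProbabilityMeasure π]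
    (c : Kernel X Y) [IsMarkovKernel c] (d : Kernel Y Z) [IsMarkovKernel d]
    (c' : Kernel Y X) [IsMarkovKernel c'] (d' : Kernel Z Y) [IsMarkovKernel d']
    (hc : IsBayesianInversion π c c')
    (hd : IsBayesianInversion (π.bind c) d d') :
    IsBayesianInversion π (d ∘ₖ c) (c' ∘ₖ d') := by
  rw [isBayesianInversion_iff_parallelComp_comp_copy_comp] at hc hd ⊢
  calc (Kernel.id ∥ₖ (c' ∘ₖ d')) ∘ₘ Kernel.copy Z ∘ₘ (d ∘ₖ c) ∘ₘ π
      = (Kernel.id ∥ₖ c') ∘ₘ (Kernel.id ∥ₖ d') ∘ₘ Kernel.copy Z ∘ₘ d ∘ₘ c ∘ₘ π := by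
        rw [← Kernel.parallelComp_id_left_comp_parallelComp]
        simp only [Measure.comp_assoc, Kernel.comp_assoc]
    _ = (Kernel.id ∥ₖ c') ∘ₘ (d ∥ₖ Kernel.id) ∘ₘ Kernel.copy Y ∘ₘ c ∘ₘ π := by rw [hd]
    _ = (d ∥ₖ Kernel.id) ∘ₘ (Kernel.id ∥ₖ c') ∘ₘ Kernel.copy Y ∘ₘ c ∘ₘ π := by
        rw [Measure.comp_assoc, Kernel.parallelComp_comm, ← Measure.comp_assoc]
    _ = (d ∥ₖ Kernel.id) ∘ₘ (c ∥ₖ Kernel.id) ∘ₘ Kernel.copy X ∘ₘ π := by rw [hc]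
    _ = ((d ∘ₖ c) ∥ₖ Kernel.id) ∘ₘ Kernel.copy X ∘ₘ π := by
        rw [Measure.comp_assoc, Kernel.parallelComp_id_right_comp_parallelComp]
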